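/- arXiv:1703.09924 — 2 statements merged into one kernel-verified Lean document; each statement's English description precedes it below -/
import Mathlib

section
/- In a finite-horizon MDP, the policy pi* = (a_0^*, ..., a_{N-1}^*) defined by choosing, at each time t and state x, an action a_t^*(x) achieving the minimum in the dynamic programming recursion, satisfies J(pi*, x) = J_0^*(x) for every initial state x; that is, the greedy policy with respect to the value functions is optimal. -/
open Finset

/-- Finite-horizon MDP: a policy that is greedy with respect to the backward
dynamic programming value functions is optimal: `J(π*, x) = J_0^*(x)`. -/
theorem greedy_policy_is_optimal
    {X A : Type} [Fintype X] [Nonempty X]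
    (N : ℕ)
    (feas : X → Finset A) (hfeas : ∀ x, (feas x).Nonempty)
    (P : ℕ → X → A → X → ℝ)
    (hPnonneg : ∀ t x a y, 0 ≤ P t x a y)
    (hPsum : ∀ t x a, ∑ y, P t x a y = 1)
    (c : X → A → X → ℝ) (CN : X → ℝ)
    (J : ℕ → X → ℝ)
    (hJN : ∀ x, J N x = CN x)
    (hJ : ∀ t, t < N → ∀ x,
      J t x = (feas x).inf' (hfeas x)
        (fun a => ∑ y, P t x a y * (c x a y + J (t + 1) y)))
    (G : (ℕ → X → A) → ℕ → X → ℝ)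
    (hGN : ∀ π x, G π N x = CN x)
    (hG : ∀ π t, t < N → ∀ x,
      G π t x = ∑ y, P t x (π t x) y * (c x (π t x) y + G π (t + 1) y))
    (πstar : ℕ → X → A)
    (hπfeas : ∀ t x, πstar t x ∈ feas x)
    (hπgreedy : ∀ t, t < N → ∀ x,
      ∑ y, P t x (πstar t x) y * (c x (πstar t x) y + J (t + 1) y)
        = (feas x).inf' (hfeas x)
            (fun a => ∑ y, P t x a y * (c x a y + J (t + 1) y))) :
    ∀ x : X, G πstar 0 x = J 0 x := by
  have key : ∀ k t, t + k = N → ∀ x, G πstar t x = J t x := by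
    intro k
    induction k with
    | zero =>
      intro t ht x
      simp at ht
      subst ht
      rw [hGN, hJN]
    | succ k ih =>
      intro t ht x
      have htN : t < N := by omega
      rw [hG πstar t htN, hJ t htN, ← hπgreedy t htN]
      have : ∀ y, G πstar (t + 1) y = J (t + 1) y := ih (t + 1) (by omega)
      simp only [this]
  intro x
  rcases Nat.le.dest (Nat.zero_le N) with ⟨k, hk⟩
  exact key N 0 (by omega) x
end

section
/- Suppose the true value functions J_t^* and approximate value functions \hat J_t satisfy the recursions with exact transition matrix P^t and approximate transition matrix \hat P^t respectively (same costs), and that for each t the row-wise total variation distance between P^t and \hat P^t is at most delta, and |c + J_{t+1}^*| <= B_t pointwise. Then max_x |J_t^*(x) - \hat J_t(x)| <= max_x |J_{t+1}^*(x) - \hat J_{t+1}(x)| + 2 delta B_t; iterating, the error at time 0 is at most 2 delta sum_t B_t. -/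
/-!
Splitting `P(c + J) - P̂(c + Ĵ) = (P - P̂)(c + J) + P̂(J - Ĵ)`, the first term is at most
`‖P - P̂‖₁ · B_t ≤ 2δB_t` and the second, an average under the stochastic row `P̂`, at most the
sup-error at time `t + 1`; minimizing over actions is 1-Lipschitz in the sup norm. The bound at
time `0` follows by telescoping the one-step bounds from the terminal time, where the error is `0`.
-/

open Finset

theorem Finset.inf'_le_inf'_add {A : Type*} {s : Finset A} (hs : s.Nonempty) {f g : A → ℝ}
    {M : ℝ} (h : ∀ a ∈ s, f a ≤ g a + M) : s.inf' hs f ≤ s.inf' hs g + M := by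
  obtain ⟨a, ha, hga⟩ := s.exists_mem_eq_inf' hs g
  rw [hga]
  exact (inf'_le f ha).trans (h a ha)

theorem Finset.abs_inf'_sub_inf'_le {A : Type*} {s : Finset A} (hs : s.Nonempty) {f g : A → ℝ}
    {M : ℝ} (h : ∀ a ∈ s, |f a - g a| ≤ M) : |s.inf' hs f - s.inf' hs g| ≤ M := by
  simp only [abs_sub_le_iff, sub_le_iff_le_add'] at h ⊢
  exact ⟨inf'_le_inf'_add hs fun a ha => (h a ha).1, inf'_le_inf'_add hs fun a ha => (h a ha).2⟩

section Expectation

variable {X : Type*} [Fintype X]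

theorem abs_sum_sub_mul_le {p q u : X → ℝ} {B : ℝ} (hu : ∀ y, |u y| ≤ B) :
    |∑ y, (p y - q y) * u y| ≤ (∑ y, |p y - q y|) * B := by
  rw [sum_mul]
  refine (abs_sum_le_sum_abs _ _).trans (sum_le_sum fun y _ => ?_)
  rw [abs_mul]
  exact mul_le_mul_of_nonneg_left (hu y) (abs_nonneg _)

theorem abs_sum_mul_le_of_stochastic {q g : X → ℝ} (hq0 : ∀ y, 0 ≤ q y) (hq1 : ∑ y, q y = 1)
    {M : ℝ} (hg : ∀ y, |g y| ≤ M) : |∑ y, q y * g y| ≤ M := by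
  calc |∑ y, q y * g y| ≤ ∑ y, q y * M := by
        refine (abs_sum_le_sum_abs _ _).trans (sum_le_sum fun y _ => ?_)
        rw [abs_mul, abs_of_nonneg (hq0 y)]
        exact mul_le_mul_of_nonneg_left (hg y) (hq0 y)
    _ = M := by rw [← sum_mul, hq1, one_mul]

theorem abs_sum_mul_sub_sum_mul_le [Nonempty X] {p q u v : X → ℝ} (hq0 : ∀ y, 0 ≤ q y)
    (hq1 : ∑ y, q y = 1) {δ : ℝ} (hTV : (1 / 2) * ∑ y, |p y - q y| ≤ δ)
    {B M : ℝ} (hu : ∀ y, |u y| ≤ B) (huv : ∀ y, |u y - v y| ≤ M) :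
    |∑ y, p y * u y - ∑ y, q y * v y| ≤ M + 2 * δ * B := by
  have hB : 0 ≤ B := (abs_nonneg _).trans (hu (Classical.arbitrary X))
  have hsplit : ∑ y, p y * u y - ∑ y, q y * v y
      = ∑ y, (p y - q y) * u y + ∑ y, q y * (u y - v y) := by
    rw [← sum_sub_distrib, ← sum_add_distrib]
    exact sum_congr rfl fun y _ => by ring
  have hdrift : |∑ y, (p y - q y) * u y| ≤ 2 * δ * B :=
    (abs_sum_sub_mul_le hu).trans (mul_le_mul_of_nonneg_right (by linarith) hB)
  have havg : |∑ y, q y * (u y - v y)| ≤ M := abs_sum_mul_le_of_stochastic hq0 hq1 huv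
  rw [hsplit]
  linarith [abs_add_le (∑ y, (p y - q y) * u y) (∑ y, q y * (u y - v y))]

end Expectation

theorem le_add_sum_of_le_succ_add {e b : ℕ → ℝ} {N : ℕ} (h : ∀ t < N, e t ≤ e (t + 1) + b t) :
    e 0 ≤ e N + ∑ t ∈ range N, b t := by
  have : e 0 - e N ≤ ∑ t ∈ range N, b t := by
    rw [← sum_range_sub']
    exact sum_le_sum fun t ht => by linarith [h t (mem_range.1 ht)]
  linarith

theorem dp_error_propagation_general
    {X A : Type} [Fintype X] [Nonempty X]
    (N : ℕ)
    (feas : X → Finset A) (hfeas : ∀ x, (feas x).Nonempty)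
    (P Phat : ℕ → X → A → X → ℝ)
    (hPhatnonneg : ∀ t x a y, 0 ≤ Phat t x a y)
    (hPhatsum : ∀ t x a, ∑ y, Phat t x a y = 1)
    (δ : ℝ)
    (hTV : ∀ t x a, (1 / 2) * ∑ y, |P t x a y - Phat t x a y| ≤ δ)
    (c : X → A → X → ℝ) (CN : X → ℝ)
    (J Jhat : ℕ → X → ℝ)
    (hJN : ∀ x, J N x = CN x)
    (hJhatN : ∀ x, Jhat N x = CN x)
    (hJ : ∀ t, t < N → ∀ x,
      J t x = (feas x).inf' (hfeas x)
        (fun a => ∑ y, P t x a y * (c x a y + J (t + 1) y)))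
    (hJhat : ∀ t, t < N → ∀ x,
      Jhat t x = (feas x).inf' (hfeas x)
        (fun a => ∑ y, Phat t x a y * (c x a y + Jhat (t + 1) y)))
    (B : ℕ → ℝ)
    (hB : ∀ t, t < N → ∀ x a y, |c x a y + J (t + 1) y| ≤ B t) :
    (∀ t, t < N → ∀ x,
        |J t x - Jhat t x|
          ≤ (univ.sup' univ_nonempty fun x' => |J (t + 1) x' - Jhat (t + 1) x'|)
            + 2 * δ * B t)
      ∧ ∀ x, |J 0 x - Jhat 0 x| ≤ 2 * δ * ∑ t ∈ Finset.range N, B t := by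
  set err : ℕ → ℝ := fun t => univ.sup' univ_nonempty fun x => |J t x - Jhat t x|
  have le_err : ∀ t x, |J t x - Jhat t x| ≤ err t := fun t x =>
    le_sup' (fun x => |J t x - Jhat t x|) (mem_univ x)
  have step : ∀ t < N, ∀ x, |J t x - Jhat t x| ≤ err (t + 1) + 2 * δ * B t := by
    intro t ht x
    rw [hJ t ht x, hJhat t ht x]
    refine abs_inf'_sub_inf'_le _ fun a _ =>
      abs_sum_mul_sub_sum_mul_le (hPhatnonneg t x a) (hPhatsum t x a) (hTV t x a)
        (hB t ht x a) fun y => ?_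
    rw [add_sub_add_left_eq_sub]
    exact le_err (t + 1) y
  have err_N : err N = 0 := by simp [err, hJN, hJhatN]
  refine ⟨step, fun x => ?_⟩
  have telescope := le_add_sum_of_le_succ_add (e := err) (b := fun t => 2 * δ * B t)
    fun t ht => sup'_le _ _ fun x _ => step t ht x
  rw [err_N, zero_add, ← mul_sum] at telescope
  exact (le_err 0 x).trans telescope

/-- Error propagation for dynamic programming with an approximate transition
matrix: if the row-wise total variation distance between `P^t` and `P̂^t` is at
most `δ` and `|c + J_{t+1}^*| ≤ B t`, then the one-step error satisfies
`max_x |J_t^*(x) − Ĵ_t(x)| ≤ max_x |J_{t+1}^*(x) − Ĵ_{t+1}(x)| + 2 δ B t`, and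
iterating, the error at time 0 is at most `2 δ ∑_t B t`. -/
theorem dp_error_propagation
    {X A : Type} [Fintype X] [Nonempty X]
    (N : ℕ)
    (feas : X → Finset A) (hfeas : ∀ x, (feas x).Nonempty)
    (P Phat : ℕ → X → A → X → ℝ)
    (hPnonneg : ∀ t x a y, 0 ≤ P t x a y)
    (hPsum : ∀ t x a, ∑ y, P t x a y = 1)
    (hPhatnonneg : ∀ t x a y, 0 ≤ Phat t x a y)
    (hPhatsum : ∀ t x a, ∑ y, Phat t x a y = 1)
    (δ : ℝ) (hδ : 0 ≤ δ)
    (hTV : ∀ t x a, (1 / 2) * ∑ y, |P t x a y - Phat t x a y| ≤ δ)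
    (c : X → A → X → ℝ) (CN : X → ℝ)
    (J Jhat : ℕ → X → ℝ)
    (hJN : ∀ x, J N x = CN x)
    (hJhatN : ∀ x, Jhat N x = CN x)
    (hJ : ∀ t, t < N → ∀ x,
      J t x = (feas x).inf' (hfeas x)
        (fun a => ∑ y, P t x a y * (c x a y + J (t + 1) y)))
    (hJhat : ∀ t, t < N → ∀ x,
      Jhat t x = (feas x).inf' (hfeas x)
        (fun a => ∑ y, Phat t x a y * (c x a y + Jhat (t + 1) y)))
    (B : ℕ → ℝ)
    (hB : ∀ t, t < N → ∀ x a y, |c x a y + J (t + 1) y| ≤ B t) :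
    (∀ t, t < N → ∀ x,
        |J t x - Jhat t x|
          ≤ (univ.sup' univ_nonempty fun x' => |J (t + 1) x' - Jhat (t + 1) x'|)
            + 2 * δ * B t)
      ∧ ∀ x, |J 0 x - Jhat 0 x| ≤ 2 * δ * ∑ t ∈ Finset.range N, B t :=
  dp_error_propagation_general N feas hfeas P Phat hPhatnonneg hPhatsum δ hTV c CN J Jhat hJN hJhatN
    hJ hJhat B hB
end
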